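/- Let α be a smooth 1-form on the punctured unit disk D \ {0} (Euclidean metric) with ∫_{D} |α|² < ∞ and dα = 0. Then ∫_{S¹_r} α = 0 for every circle of radius r, i.e., α is exact on D \ {0}. Proof: the period c = ∫_{S¹_r}α is independent of r, Cauchy–Schwarz gives c² ≤ 2πr² ∫_0^{2π}|α|²(r,θ)dθ, and dividing by r and integrating over [ε,1] yields -c² log ε ≤ 2π ∫_D |α|², forcing c = 0 as ε → 0. -/

import Mathlib

open MeasureTheory Real Set
open scoped ENNReal NNReal

noncomputable section

private lemma gamma_mem {r θ : ℝ} (h0 : 0 < r) (h1 : r < 1) :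
    (r : ℂ) * Complex.exp (θ * Complex.I) ∈ Metric.ball (0:ℂ) 1 \ {0} := by
  constructor
  · simp only [Metric.mem_ball, dist_zero_right, Complex.norm_mul,
      Complex.norm_exp_ofReal_mul_I, mul_one, Complex.norm_real, Real.norm_eq_abs, abs_of_pos h0]
    exact h1
  · simp only [Set.mem_singleton_iff, mul_eq_zero, Complex.exp_ne_zero, or_false,
      Complex.ofReal_eq_zero]
    exact fun h => h0.ne' h

private lemma hasDerivAt_expI (θ : ℝ) :
    HasDerivAt (fun t : ℝ => Complex.exp (t * Complex.I))
      (Complex.I * Complex.exp (θ * Complex.I)) θ := by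
  have h1 : HasDerivAt (fun t : ℝ => (t : ℂ)) 1 θ := Complex.ofRealCLM.hasDerivAt
  have h2 := (h1.mul_const Complex.I).cexp
  simpa [mul_comm] using h2

private lemma hasDerivAt_ofReal_mul (c : ℂ) (x : ℝ) :
    HasDerivAt (fun t : ℝ => (t : ℂ) * c) c x := by
  have h1 : HasDerivAt (fun t : ℝ => (t : ℂ)) 1 x := Complex.ofRealCLM.hasDerivAt
  simpa using h1.mul_const c

/-- derivative in `x` of `x ↦ α(x e^{iθ}) (x i e^{iθ})`, given differentiability of `α`. -/
private lemma hasDerivAt_F (α : ℂ → (ℂ →L[ℝ] ℝ)) {x θ : ℝ}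
    (hα : HasFDerivAt α (fderiv ℝ α ((x:ℂ) * Complex.exp (θ * Complex.I)))
      ((x:ℂ) * Complex.exp (θ * Complex.I))) :
    HasDerivAt (fun y : ℝ => α ((y:ℂ) * Complex.exp (θ * Complex.I))
        ((y:ℂ) * Complex.I * Complex.exp (θ * Complex.I)))
      (fderiv ℝ α ((x:ℂ) * Complex.exp (θ * Complex.I)) (Complex.exp (θ * Complex.I))
          ((x:ℂ) * Complex.I * Complex.exp (θ * Complex.I))
        + α ((x:ℂ) * Complex.exp (θ * Complex.I)) (Complex.I * Complex.exp (θ * Complex.I))) x := by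
  have hc : HasDerivAt (fun y : ℝ => α ((y:ℂ) * Complex.exp (θ * Complex.I)))
      (fderiv ℝ α ((x:ℂ) * Complex.exp (θ * Complex.I)) (Complex.exp (θ * Complex.I))) x :=
    hα.comp_hasDerivAt x (hasDerivAt_ofReal_mul _ x)
  have hu : HasDerivAt (fun y : ℝ => (y:ℂ) * Complex.I * Complex.exp (θ * Complex.I))
      (Complex.I * Complex.exp (θ * Complex.I)) x := by
    simpa [mul_assoc] using hasDerivAt_ofReal_mul (Complex.I * Complex.exp (θ * Complex.I)) x
  exact hc.clm_apply hu

/-- derivative in `θ` of `θ ↦ α(x e^{iθ}) (e^{iθ})`. -/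
private lemma hasDerivAt_G (α : ℂ → (ℂ →L[ℝ] ℝ)) {x θ : ℝ}
    (hα : HasFDerivAt α (fderiv ℝ α ((x:ℂ) * Complex.exp (θ * Complex.I)))
      ((x:ℂ) * Complex.exp (θ * Complex.I))) :
    HasDerivAt (fun t : ℝ => α ((x:ℂ) * Complex.exp (t * Complex.I)) (Complex.exp (t * Complex.I)))
      (fderiv ℝ α ((x:ℂ) * Complex.exp (θ * Complex.I))
          ((x:ℂ) * Complex.I * Complex.exp (θ * Complex.I)) (Complex.exp (θ * Complex.I))
        + α ((x:ℂ) * Complex.exp (θ * Complex.I)) (Complex.I * Complex.exp (θ * Complex.I))) θ := by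
  have hγ : HasDerivAt (fun t : ℝ => (x:ℂ) * Complex.exp (t * Complex.I))
      ((x:ℂ) * Complex.I * Complex.exp (θ * Complex.I)) θ := by
    simpa [mul_assoc] using (hasDerivAt_expI θ).const_mul ((x:ℂ))
  have hc : HasDerivAt (fun t : ℝ => α ((x:ℂ) * Complex.exp (t * Complex.I)))
      (fderiv ℝ α ((x:ℂ) * Complex.exp (θ * Complex.I))
        ((x:ℂ) * Complex.I * Complex.exp (θ * Complex.I))) θ :=
    hα.comp_hasDerivAt θ hγ
  exact hc.clm_apply (hasDerivAt_expI θ)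



section
variable (α : ℂ → (ℂ →L[ℝ] ℝ))
  (hsm : ContDiffOn ℝ (⊤ : ℕ∞) α (Metric.ball 0 1 \ {0}))

private lemma gamma_cont (x : ℝ) :
    Continuous (fun θ : ℝ => (x:ℂ) * Complex.exp (θ * Complex.I)) :=
  continuous_const.mul (Complex.continuous_exp.comp
    ((Complex.continuous_ofReal).mul continuous_const))

include hsm in
private lemma cont_alpha_gamma {x : ℝ} (h0 : 0 < x) (h1 : x < 1) :
    Continuous (fun θ : ℝ => α ((x:ℂ) * Complex.exp (θ * Complex.I))) :=
  hsm.continuousOn.comp_continuous (gamma_cont x)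
    (fun θ => by { have := @gamma_mem x θ h0 h1; exact this })

include hsm in
private lemma cont_dalpha_gamma {x : ℝ} (h0 : 0 < x) (h1 : x < 1) :
    Continuous (fun θ : ℝ => fderiv ℝ α ((x:ℂ) * Complex.exp (θ * Complex.I))) :=
  (hsm.continuousOn_fderiv_of_isOpen (Metric.isOpen_ball.sdiff isClosed_singleton) (by simp)
    ).comp_continuous (gamma_cont x) (fun θ => gamma_mem h0 h1)


include hsm in
private lemma period_hasDeriv {r₀ : ℝ}
    (hclosed : ∀ x ∈ Metric.ball (0:ℂ) 1 \ {0}, ∀ v w : ℂ,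
      fderiv ℝ α x v w = fderiv ℝ α x w v)
    (h0 : 0 < r₀) (h1 : r₀ < 1) :
    HasDerivAt (fun x : ℝ => ∫ θ in (0:ℝ)..(2 * π),
      α ((x : ℂ) * Complex.exp (θ * Complex.I))
        ((x : ℂ) * Complex.I * Complex.exp (θ * Complex.I))) 0 r₀ := by
  have hU : IsOpen (Metric.ball (0:ℂ) 1 \ {0}) :=
    Metric.isOpen_ball.sdiff isClosed_singleton
  have hdiffα : ∀ z ∈ Metric.ball (0:ℂ) 1 \ {0}, HasFDerivAt α (fderiv ℝ α z) z := by
    intro z hz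
    exact ((hsm.differentiableOn (by simp) z hz).differentiableAt (hU.mem_nhds hz)).hasFDerivAt
  -- the radius window
  set ε : ℝ := min (r₀ / 2) ((1 - r₀) / 2) with hε
  have hεpos : 0 < ε := lt_min (by linarith) (by linarith)
  have hball : ∀ x ∈ Metric.ball r₀ ε, r₀ / 2 ≤ x ∧ x ≤ (1 + r₀) / 2 := by
    intro x hx
    rw [Metric.mem_ball, Real.dist_eq, abs_lt] at hx
    constructor
    · have h2 : ε ≤ r₀/2 := min_le_left _ _
      linarith [hx.1]
    · have := hx.2; have h2 : ε ≤ (1 - r₀)/2 := min_le_right _ _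
      linarith
  have hballIoo : ∀ x ∈ Metric.ball r₀ ε, 0 < x ∧ x < 1 := by
    intro x hx
    obtain ⟨hl, hr⟩ := hball x hx
    exact ⟨by linarith, by linarith⟩
  -- compact annulus
  set K : Set ℂ := Metric.closedBall 0 ((1 + r₀)/2) \ Metric.ball 0 (r₀/2) with hK
  have hKcompact : IsCompact K := (isCompact_closedBall _ _).diff Metric.isOpen_ball
  have hKU : K ⊆ Metric.ball (0:ℂ) 1 \ {0} := by
    rintro z ⟨hz1, hz2⟩
    rw [Metric.mem_closedBall, dist_zero_right] at hz1
    rw [Metric.mem_ball, dist_zero_right, not_lt] at hz2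
    constructor
    · rw [Metric.mem_ball, dist_zero_right]; linarith
    · simp only [Set.mem_singleton_iff]
      intro h; rw [h] at hz2; simp at hz2; linarith
  have hγK : ∀ x ∈ Metric.ball r₀ ε, ∀ θ : ℝ,
      (x:ℂ) * Complex.exp (θ * Complex.I) ∈ K := by
    intro x hx θ
    obtain ⟨hl, hr⟩ := hball x hx
    obtain ⟨hx0, _⟩ := hballIoo x hx
    have habs : ‖((x:ℂ) * Complex.exp (θ * Complex.I))‖ = x := by
      simp [Complex.norm_exp_ofReal_mul_I, abs_of_pos hx0]
    constructor
    · rw [Metric.mem_closedBall, dist_zero_right, habs]; exact hr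
    · rw [Metric.mem_ball, dist_zero_right, habs]
      push_neg; exact hl
  -- bounds on α and its derivative on K
  obtain ⟨M₁, hM₁⟩ := hKcompact.exists_bound_of_continuousOn (hsm.continuousOn.mono hKU)
  obtain ⟨M₂, hM₂⟩ := hKcompact.exists_bound_of_continuousOn
    ((hsm.continuousOn_fderiv_of_isOpen hU (by simp)).mono hKU)
  have hmem : ∀ x ∈ Metric.ball r₀ ε, ∀ θ : ℝ,
      (x:ℂ) * Complex.exp (θ * Complex.I) ∈ Metric.ball (0:ℂ) 1 \ {0} :=
    fun x hx θ => gamma_mem (hballIoo x hx).1 (hballIoo x hx).2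
  have hr₀ball : r₀ ∈ Metric.ball r₀ ε := Metric.mem_ball_self hεpos
  have hcontv : ∀ x : ℝ, Continuous (fun θ : ℝ =>
      (x:ℂ) * Complex.I * Complex.exp (θ * Complex.I)) := fun x =>
    continuous_const.mul (Complex.continuous_exp.comp
      ((Complex.continuous_ofReal).mul continuous_const))
  have hcontexp : Continuous (fun θ : ℝ => Complex.exp (θ * Complex.I)) :=
    Complex.continuous_exp.comp ((Complex.continuous_ofReal).mul continuous_const)
  have key := intervalIntegral.hasDerivAt_integral_of_dominated_loc_of_deriv_le
    (𝕜 := ℝ) (μ := volume) (a := 0) (b := 2 * π) (x₀ := r₀)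
    (F := fun x θ => α ((x:ℂ) * Complex.exp (θ * Complex.I))
        ((x:ℂ) * Complex.I * Complex.exp (θ * Complex.I)))
    (F' := fun x θ =>
      fderiv ℝ α ((x:ℂ) * Complex.exp (θ * Complex.I)) (Complex.exp (θ * Complex.I))
          ((x:ℂ) * Complex.I * Complex.exp (θ * Complex.I))
        + α ((x:ℂ) * Complex.exp (θ * Complex.I)) (Complex.I * Complex.exp (θ * Complex.I)))
    (bound := fun _ => max M₂ 0 + max M₁ 0) (Metric.ball_mem_nhds r₀ hεpos)
    ?meas ?int ?meas' ?bnd ?bint ?diff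
  case meas =>
    refine Filter.eventually_of_mem (Metric.ball_mem_nhds r₀ hεpos) (fun x hx => ?_)
    exact ((cont_alpha_gamma α hsm (hballIoo x hx).1 (hballIoo x hx).2).clm_apply
      (hcontv x)).aestronglyMeasurable
  case int =>
    exact ((cont_alpha_gamma α hsm h0 h1).clm_apply (hcontv r₀)).intervalIntegrable 0 (2 * π)
  case meas' =>
    exact (((cont_dalpha_gamma α hsm h0 h1).clm_apply hcontexp).clm_apply (hcontv r₀)).add
      ((cont_alpha_gamma α hsm h0 h1).clm_apply
        (continuous_const.mul hcontexp)) |>.aestronglyMeasurable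
  case bnd =>
    refine Filter.Eventually.of_forall (fun θ _ x hx => ?_)
    obtain ⟨hx0, hx1⟩ := hballIoo x hx
    have hzK := hγK x hx θ
    have hv : ‖Complex.exp ((θ:ℂ) * Complex.I)‖ = 1 := by
      simp [Complex.norm_exp_ofReal_mul_I]
    have hw : ‖(x:ℂ) * Complex.I * Complex.exp ((θ:ℂ) * Complex.I)‖ = x := by
      simp [Complex.norm_exp_ofReal_mul_I,
        abs_of_pos hx0]
    have hwI : ‖Complex.I * Complex.exp ((θ:ℂ) * Complex.I)‖ = 1 := by
      simp [Complex.norm_exp_ofReal_mul_I]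
    calc ‖fderiv ℝ α ((x:ℂ) * Complex.exp (θ * Complex.I)) (Complex.exp (θ * Complex.I))
          ((x:ℂ) * Complex.I * Complex.exp (θ * Complex.I))
        + α ((x:ℂ) * Complex.exp (θ * Complex.I)) (Complex.I * Complex.exp (θ * Complex.I))‖
        ≤ ‖fderiv ℝ α ((x:ℂ) * Complex.exp (θ * Complex.I)) (Complex.exp (θ * Complex.I))
          ((x:ℂ) * Complex.I * Complex.exp (θ * Complex.I))‖
        + ‖α ((x:ℂ) * Complex.exp (θ * Complex.I))
            (Complex.I * Complex.exp (θ * Complex.I))‖ := norm_add_le _ _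
      _ ≤ ‖fderiv ℝ α ((x:ℂ) * Complex.exp (θ * Complex.I))‖ * ‖Complex.exp ((θ:ℂ) * Complex.I)‖
            * ‖(x:ℂ) * Complex.I * Complex.exp ((θ:ℂ) * Complex.I)‖
          + ‖α ((x:ℂ) * Complex.exp (θ * Complex.I))‖
            * ‖Complex.I * Complex.exp ((θ:ℂ) * Complex.I)‖ := by
          gcongr
          · exact ((fderiv ℝ α _ _).le_opNorm _).trans
              (by gcongr; exact (fderiv ℝ α _).le_opNorm _)
          · exact (α _).le_opNorm _
      _ ≤ max M₂ 0 + max M₁ 0 := by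
          rw [hv, hw, hwI]
          have h₂ := (hM₂ _ hzK).trans (le_max_left M₂ 0)
          have h₁ := (hM₁ _ hzK).trans (le_max_left M₁ 0)
          have hn₂ := norm_nonneg (fderiv ℝ α ((x:ℂ) * Complex.exp (θ * Complex.I)))
          have hn₁ := norm_nonneg (α ((x:ℂ) * Complex.exp (θ * Complex.I)))
          nlinarith [le_max_right M₂ 0, le_max_right M₁ 0, hx0.le, hx1.le]
  case bint => exact intervalIntegrable_const
  case diff =>
    refine Filter.Eventually.of_forall (fun θ _ x hx => ?_)
    exact hasDerivAt_F α (hdiffα _ (hmem x hx θ))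
  -- now the integral of F' r₀ vanishes
  have hzero : (∫ θ in (0:ℝ)..(2 * π),
      (fderiv ℝ α ((r₀:ℂ) * Complex.exp (θ * Complex.I)) (Complex.exp (θ * Complex.I))
          ((r₀:ℂ) * Complex.I * Complex.exp (θ * Complex.I))
        + α ((r₀:ℂ) * Complex.exp (θ * Complex.I))
            (Complex.I * Complex.exp (θ * Complex.I)))) = 0 := by
    have heq : ∀ θ : ℝ,
        fderiv ℝ α ((r₀:ℂ) * Complex.exp (θ * Complex.I)) (Complex.exp (θ * Complex.I))
            ((r₀:ℂ) * Complex.I * Complex.exp (θ * Complex.I))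
          + α ((r₀:ℂ) * Complex.exp (θ * Complex.I)) (Complex.I * Complex.exp (θ * Complex.I))
        = fderiv ℝ α ((r₀:ℂ) * Complex.exp (θ * Complex.I))
            ((r₀:ℂ) * Complex.I * Complex.exp (θ * Complex.I)) (Complex.exp (θ * Complex.I))
          + α ((r₀:ℂ) * Complex.exp (θ * Complex.I))
              (Complex.I * Complex.exp (θ * Complex.I)) := by
      intro θ
      rw [hclosed _ (hmem r₀ hr₀ball θ)]
    rw [intervalIntegral.integral_congr (fun θ _ => heq θ)]
    have hint : IntervalIntegrable (fun θ : ℝ =>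
        fderiv ℝ α ((r₀:ℂ) * Complex.exp (θ * Complex.I))
            ((r₀:ℂ) * Complex.I * Complex.exp (θ * Complex.I)) (Complex.exp (θ * Complex.I))
          + α ((r₀:ℂ) * Complex.exp (θ * Complex.I))
              (Complex.I * Complex.exp (θ * Complex.I))) volume 0 (2 * π) :=
      ((((cont_dalpha_gamma α hsm h0 h1).clm_apply (hcontv r₀)).clm_apply hcontexp).add
        ((cont_alpha_gamma α hsm h0 h1).clm_apply
          (continuous_const.mul hcontexp))).intervalIntegrable 0 (2 * π)
    rw [intervalIntegral.integral_eq_sub_of_hasDerivAt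
      (f := fun t : ℝ => α ((r₀:ℂ) * Complex.exp (t * Complex.I)) (Complex.exp (t * Complex.I)))
      (fun θ _ => hasDerivAt_G α (hdiffα _ (hmem r₀ hr₀ball θ))) hint]
    have h2π : Complex.exp (((2 * π : ℝ) : ℂ) * Complex.I) = 1 := by
      push_cast
      exact Complex.exp_two_pi_mul_I
    have h0' : Complex.exp (((0 : ℝ) : ℂ) * Complex.I) = 1 := by
      norm_num
    rw [h2π, h0']
    ring
  have hfin := key.2
  rw [hzero] at hfin
  exact hfin

include hsm in
private lemma period_const
    (hclosed : ∀ x ∈ Metric.ball (0:ℂ) 1 \ {0}, ∀ v w : ℂ,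
      fderiv ℝ α x v w = fderiv ℝ α x w v)
    {x y : ℝ} (hx : x ∈ Ioo (0:ℝ) 1) (hy : y ∈ Ioo (0:ℝ) 1) :
    (∫ θ in (0:ℝ)..(2 * π), α ((x : ℂ) * Complex.exp (θ * Complex.I))
        ((x : ℂ) * Complex.I * Complex.exp (θ * Complex.I)))
    = ∫ θ in (0:ℝ)..(2 * π), α ((y : ℂ) * Complex.exp (θ * Complex.I))
        ((y : ℂ) * Complex.I * Complex.exp (θ * Complex.I)) := by
  have hD : ∀ z ∈ Ioo (0:ℝ) 1, HasDerivAt (fun x : ℝ => ∫ θ in (0:ℝ)..(2 * π),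
      α ((x : ℂ) * Complex.exp (θ * Complex.I))
        ((x : ℂ) * Complex.I * Complex.exp (θ * Complex.I))) 0 z :=
    fun z hz => period_hasDeriv α hsm hclosed hz.1 hz.2
  apply (convex_Ioo (0:ℝ) 1).is_const_of_fderivWithin_eq_zero
    (fun z hz => (hD z hz).differentiableAt.differentiableWithinAt) _ hx hy
  intro z hz
  rw [fderivWithin_of_isOpen isOpen_Ioo hz]
  have h := (hD z hz).hasFDerivAt.fderiv
  rw [h]
  ext u
  simp

include hsm in
private lemma period_sq_le {s : ℝ} (h0 : 0 < s) (h1 : s < 1) :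
    (∫ θ in (0:ℝ)..(2 * π), α ((s : ℂ) * Complex.exp (θ * Complex.I))
        ((s : ℂ) * Complex.I * Complex.exp (θ * Complex.I))) ^ 2
      ≤ 2 * π * s ^ 2 *
        ∫ θ in (0:ℝ)..(2 * π), ‖α ((s : ℂ) * Complex.exp (θ * Complex.I))‖ ^ 2 := by
  have hπ : (0:ℝ) ≤ 2 * π := by positivity
  have hcont : Continuous (fun θ : ℝ => ‖α ((s : ℂ) * Complex.exp (θ * Complex.I))‖) :=
    (cont_alpha_gamma α hsm h0 h1).norm
  have hcontv : Continuous (fun θ : ℝ =>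
      (s:ℂ) * Complex.I * Complex.exp (θ * Complex.I)) :=
    continuous_const.mul (Complex.continuous_exp.comp
      ((Complex.continuous_ofReal).mul continuous_const))
  have hcontF : Continuous (fun θ : ℝ => α ((s : ℂ) * Complex.exp (θ * Complex.I))
      ((s : ℂ) * Complex.I * Complex.exp (θ * Complex.I))) :=
    (cont_alpha_gamma α hsm h0 h1).clm_apply hcontv
  set A : ℝ := ∫ θ in (0:ℝ)..(2 * π), ‖α ((s : ℂ) * Complex.exp (θ * Complex.I))‖ with hA
  set B : ℝ := ∫ θ in (0:ℝ)..(2 * π), ‖α ((s : ℂ) * Complex.exp (θ * Complex.I))‖ ^ 2 with hB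
  have hint_h : IntervalIntegrable (fun θ : ℝ => ‖α ((s : ℂ) * Complex.exp (θ * Complex.I))‖)
      volume 0 (2 * π) := hcont.intervalIntegrable 0 (2 * π)
  have hint_h2 : IntervalIntegrable
      (fun θ : ℝ => ‖α ((s : ℂ) * Complex.exp (θ * Complex.I))‖ ^ 2)
      volume 0 (2 * π) := (hcont.pow 2).intervalIntegrable 0 (2 * π)
  have hA0 : 0 ≤ A := intervalIntegral.integral_nonneg hπ (fun u _ => norm_nonneg _)
  have hB0 : 0 ≤ B := intervalIntegral.integral_nonneg hπ (fun u _ => sq_nonneg _)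
  -- Cauchy-Schwarz: A^2 ≤ 2π B
  have hCS : A ^ 2 ≤ 2 * π * B := by
    have hnon : 0 ≤ ∫ θ in (0:ℝ)..(2 * π),
        (2 * π * ‖α ((s : ℂ) * Complex.exp (θ * Complex.I))‖ - A) ^ 2 :=
      intervalIntegral.integral_nonneg hπ (fun u _ => sq_nonneg _)
    have hexp : (fun θ : ℝ =>
        (2 * π * ‖α ((s : ℂ) * Complex.exp (θ * Complex.I))‖ - A) ^ 2)
        = fun θ : ℝ => ((2 * π) ^ 2 * ‖α ((s : ℂ) * Complex.exp (θ * Complex.I))‖ ^ 2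
            - 4 * π * A * ‖α ((s : ℂ) * Complex.exp (θ * Complex.I))‖) + A ^ 2 := by
      funext θ; ring
    rw [hexp, intervalIntegral.integral_add ((hint_h2.const_mul ((2 * π) ^ 2)).sub
        (hint_h.const_mul (4 * π * A))) intervalIntegrable_const,
      intervalIntegral.integral_sub (hint_h2.const_mul ((2 * π) ^ 2))
        (hint_h.const_mul (4 * π * A)),
      intervalIntegral.integral_const_mul, intervalIntegral.integral_const,
      intervalIntegral.integral_const_mul] at hnon
    rw [← hA, ← hB, smul_eq_mul, sub_zero] at hnon
    have hπ' : 0 < π := Real.pi_pos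
    nlinarith [hnon, hπ', sq_nonneg A]
  -- |P| ≤ s * A
  have hPA : |∫ θ in (0:ℝ)..(2 * π), α ((s : ℂ) * Complex.exp (θ * Complex.I))
      ((s : ℂ) * Complex.I * Complex.exp (θ * Complex.I))| ≤ s * A := by
    have step1 := intervalIntegral.abs_integral_le_integral_abs
      (f := fun θ : ℝ => α ((s : ℂ) * Complex.exp (θ * Complex.I))
        ((s : ℂ) * Complex.I * Complex.exp (θ * Complex.I))) (μ := volume) hπ
    have step2 : (∫ θ in (0:ℝ)..(2 * π), |α ((s : ℂ) * Complex.exp (θ * Complex.I))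
        ((s : ℂ) * Complex.I * Complex.exp (θ * Complex.I))|)
        ≤ ∫ θ in (0:ℝ)..(2 * π), s * ‖α ((s : ℂ) * Complex.exp (θ * Complex.I))‖ := by
      apply intervalIntegral.integral_mono_on hπ (hcontF.abs.intervalIntegrable 0 (2 * π))
        (hint_h.const_mul s)
      intro u _
      have hw : ‖(s:ℂ) * Complex.I * Complex.exp ((u:ℂ) * Complex.I)‖ = s := by
        simp [Complex.norm_exp_ofReal_mul_I, abs_of_pos h0]
      have hle := (α ((s : ℂ) * Complex.exp (u * Complex.I))).le_opNorm
        ((s:ℂ) * Complex.I * Complex.exp ((u:ℂ) * Complex.I))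
      rw [hw] at hle
      have : |α ((s : ℂ) * Complex.exp (u * Complex.I))
          ((s : ℂ) * Complex.I * Complex.exp (u * Complex.I))|
          = ‖α ((s : ℂ) * Complex.exp (u * Complex.I))
          ((s : ℂ) * Complex.I * Complex.exp (u * Complex.I))‖ := rfl
      rw [this]
      linarith [hle]
    have step3 : (∫ θ in (0:ℝ)..(2 * π), s * ‖α ((s : ℂ) * Complex.exp (θ * Complex.I))‖)
        = s * A := intervalIntegral.integral_const_mul s _
    linarith [step1, step2]
  have hsq : (∫ θ in (0:ℝ)..(2 * π), α ((s : ℂ) * Complex.exp (θ * Complex.I))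
      ((s : ℂ) * Complex.I * Complex.exp (θ * Complex.I))) ^ 2 ≤ (s * A) ^ 2 := by
    have h1' := sq_abs (∫ θ in (0:ℝ)..(2 * π), α ((s : ℂ) * Complex.exp (θ * Complex.I))
      ((s : ℂ) * Complex.I * Complex.exp (θ * Complex.I)))
    have h2' := abs_nonneg (∫ θ in (0:ℝ)..(2 * π), α ((s : ℂ) * Complex.exp (θ * Complex.I))
      ((s : ℂ) * Complex.I * Complex.exp (θ * Complex.I)))
    nlinarith [hPA]
  have hfin : (s * A) ^ 2 ≤ 2 * π * s ^ 2 * B := by nlinarith [mul_le_mul_of_nonneg_left hCS (sq_nonneg s)]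
  linarith

include hsm in
private lemma polar_le {ε' : ℝ} (hε0 : 0 < ε') (hε1 : ε' < 1) :
    (∫⁻ x in Ioo ε' 1, ∫⁻ θ in Ioo (-π) π,
        ENNReal.ofReal (x * ‖α ((x:ℂ) * Complex.exp (θ * Complex.I))‖ ^ 2))
      ≤ ∫⁻ z in Metric.ball (0:ℂ) 1, ENNReal.ofReal (‖α z‖ ^ 2) := by
  set s : Set (ℝ × ℝ) := Ioo ε' 1 ×ˢ Ioo (-π) π with hsdef
  have hs : MeasurableSet s := measurableSet_Ioo.prod measurableSet_Ioo
  have hsub : s ⊆ polarCoord.target := by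
    rintro ⟨p1, p2⟩ ⟨h1, h2⟩
    exact ⟨mem_Ioi.2 (hε0.trans h1.1), h2⟩
  have hinj : InjOn polarCoord.symm s := polarCoord.symm.injOn.mono hsub
  set g2' : ℝ × ℝ → ℝ≥0∞ :=
    fun q => ENNReal.ofReal (‖α (Complex.measurableEquivRealProd.symm q)‖ ^ 2) with hg2'
  set B : ℝ × ℝ → ℝ × ℝ →L[ℝ] ℝ × ℝ := fun p =>
    LinearMap.toContinuousLinearMap (Matrix.toLin (Module.Basis.finTwoProd ℝ) (Module.Basis.finTwoProd ℝ)
      !![Real.cos p.2, -p.1 * Real.sin p.2; Real.sin p.2, p.1 * Real.cos p.2]) with hB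
  have hder : ∀ p ∈ s, HasFDerivWithinAt polarCoord.symm (B p) s p :=
    fun p _ => (hasFDerivAt_polarCoord_symm p).hasFDerivWithinAt
  have hB_det : ∀ p, (B p).det = p.1 := by
    intro p
    conv_rhs => rw [← one_mul p.1, ← Real.cos_sq_add_sin_sq p.2]
    simp only [hB, neg_mul, LinearMap.det_toContinuousLinearMap, LinearMap.det_toLin,
      Matrix.det_fin_two_of, sub_neg_eq_add]
    ring
  have hchg := lintegral_image_eq_lintegral_abs_det_fderiv_mul volume hs hder hinj g2'
  -- identify the composed point with `x e^{iθ}`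
  have hz : ∀ p : ℝ × ℝ, Complex.measurableEquivRealProd.symm (polarCoord.symm p)
      = (p.1 : ℂ) * Complex.exp ((p.2 : ℂ) * Complex.I) := by
    intro p
    rw [Complex.exp_mul_I]
    apply Complex.ext <;>
      simp [polarCoord_symm_apply, Complex.cos_ofReal_re, Complex.sin_ofReal_re]
  -- right side of the change of variables equals the iterated integral
  have hRHS : (∫⁻ p in s, ENNReal.ofReal |(B p).det| * g2' (polarCoord.symm p))
      = ∫⁻ p in s, ENNReal.ofReal
          (p.1 * ‖α ((p.1 : ℂ) * Complex.exp ((p.2 : ℂ) * Complex.I))‖ ^ 2) := by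
    apply setLIntegral_congr_fun hs
    intro p hp
    have hp1 : 0 < p.1 := hε0.trans hp.1.1
    simp only [hB_det, abs_of_pos hp1, hg2', hz p, ← ENNReal.ofReal_mul hp1.le]
  -- Tonelli
  have hrestrict : (volume : Measure (ℝ × ℝ)).restrict s
      = (volume.restrict (Ioo ε' 1)).prod (volume.restrict (Ioo (-π) π)) := by
    rw [hsdef, Measure.volume_eq_prod, Measure.prod_restrict]
  have hmaps : ∀ p : ℝ × ℝ, p ∈ s →
      (p.1 : ℂ) * Complex.exp ((p.2 : ℂ) * Complex.I) ∈ Metric.ball (0:ℂ) 1 \ {0} :=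
    fun p hp => gamma_mem (hε0.trans hp.1.1) hp.1.2
  have hγcont : Continuous (fun p : ℝ × ℝ => (p.1 : ℂ) * Complex.exp ((p.2 : ℂ) * Complex.I)) :=
    (Complex.continuous_ofReal.comp continuous_fst).mul
      (Complex.continuous_exp.comp ((Complex.continuous_ofReal.comp continuous_snd).mul
        continuous_const))
  have hContOn : ContinuousOn (fun p : ℝ × ℝ =>
      p.1 * ‖α ((p.1 : ℂ) * Complex.exp ((p.2 : ℂ) * Complex.I))‖ ^ 2) s :=
    continuousOn_fst.mul
      (((hsm.continuousOn.comp hγcont.continuousOn hmaps).norm.pow 2))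
  have haem : AEMeasurable (fun p : ℝ × ℝ => ENNReal.ofReal
      (p.1 * ‖α ((p.1 : ℂ) * Complex.exp ((p.2 : ℂ) * Complex.I))‖ ^ 2))
      ((volume.restrict (Ioo ε' 1)).prod (volume.restrict (Ioo (-π) π))) := by
    rw [← hrestrict]
    exact ENNReal.measurable_ofReal.comp_aemeasurable (hContOn.aemeasurable hs)
  have hton : (∫⁻ p in s, ENNReal.ofReal
      (p.1 * ‖α ((p.1 : ℂ) * Complex.exp ((p.2 : ℂ) * Complex.I))‖ ^ 2))
      = ∫⁻ x in Ioo ε' 1, ∫⁻ θ in Ioo (-π) π,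
          ENNReal.ofReal (x * ‖α ((x:ℂ) * Complex.exp (θ * Complex.I))‖ ^ 2) := by
    rw [hrestrict]
    exact MeasureTheory.lintegral_prod _ haem
  -- image is inside the image of the ball
  have himg : polarCoord.symm '' s
      ⊆ Complex.measurableEquivRealProd '' (Metric.ball (0:ℂ) 1) := by
    rintro q ⟨p, hp, rfl⟩
    refine ⟨Complex.measurableEquivRealProd.symm (polarCoord.symm p), ?_, by simp⟩
    rw [hz p]
    have hp1 : 0 < p.1 := hε0.trans hp.1.1
    simp only [Metric.mem_ball, dist_zero_right, Complex.norm_mul,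
      Complex.norm_real, Real.norm_eq_abs, abs_of_pos hp1]
    calc p.1 * ‖(Complex.exp ((p.2:ℂ) * Complex.I))‖ = p.1 := by
          rw [Complex.norm_exp_ofReal_mul_I, mul_one]
      _ < 1 := hp.1.2
  have hball : (∫⁻ q in Complex.measurableEquivRealProd '' (Metric.ball (0:ℂ) 1), g2' q)
      = ∫⁻ z in Metric.ball (0:ℂ) 1, ENNReal.ofReal (‖α z‖ ^ 2) := by
    rw [← Complex.volume_preserving_equiv_real_prod.setLIntegral_comp_emb
      Complex.measurableEquivRealProd.measurableEmbedding g2' (Metric.ball (0:ℂ) 1)]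
    apply setLIntegral_congr_fun Metric.isOpen_ball.measurableSet
    intro z hz
    simp [hg2']
  calc (∫⁻ x in Ioo ε' 1, ∫⁻ θ in Ioo (-π) π,
        ENNReal.ofReal (x * ‖α ((x:ℂ) * Complex.exp (θ * Complex.I))‖ ^ 2))
      = ∫⁻ p in s, ENNReal.ofReal |(B p).det| * g2' (polarCoord.symm p) := by
        rw [hRHS, hton]
    _ = ∫⁻ q in polarCoord.symm '' s, g2' q := hchg.symm
    _ ≤ ∫⁻ q in Complex.measurableEquivRealProd '' (Metric.ball (0:ℂ) 1), g2' q :=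
        lintegral_mono_set himg
    _ = ∫⁻ z in Metric.ball (0:ℂ) 1, ENNReal.ofReal (‖α z‖ ^ 2) := hball

include hsm in
private lemma inner_bound
    (hclosed : ∀ x ∈ Metric.ball (0:ℂ) 1 \ {0}, ∀ v w : ℂ,
      fderiv ℝ α x v w = fderiv ℝ α x w v)
    {c : ℝ}
    (hcval : ∀ s ∈ Ioo (0:ℝ) 1, (∫ θ in (0:ℝ)..(2 * π),
      α ((s : ℂ) * Complex.exp (θ * Complex.I))
        ((s : ℂ) * Complex.I * Complex.exp (θ * Complex.I))) = c)
    {x : ℝ} (hx0 : 0 < x) (hx1 : x < 1) :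
    ENNReal.ofReal (c ^ 2 / (2 * π) * (1 / x))
      ≤ ∫⁻ θ in Ioo (-π) π,
          ENNReal.ofReal (x * ‖α ((x:ℂ) * Complex.exp (θ * Complex.I))‖ ^ 2) := by
  have hπ : 0 < π := Real.pi_pos
  have hcont2 : Continuous (fun θ : ℝ => ‖α ((x:ℂ) * Complex.exp (θ * Complex.I))‖ ^ 2) :=
    (cont_alpha_gamma α hsm hx0 hx1).norm.pow 2
  set T : ℝ := ∫ θ in Ioo (-π) π, ‖α ((x:ℂ) * Complex.exp (θ * Complex.I))‖ ^ 2 with hT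
  have hTint : IntegrableOn (fun θ : ℝ => ‖α ((x:ℂ) * Complex.exp (θ * Complex.I))‖ ^ 2)
      (Ioo (-π) π) := (hcont2.integrableOn_Icc).mono_set Ioo_subset_Icc_self
  have hperiodic : Function.Periodic
      (fun θ : ℝ => ‖α ((x:ℂ) * Complex.exp (θ * Complex.I))‖ ^ 2) (2 * π) := by
    intro t
    have hexp : Complex.exp (((t + 2 * π : ℝ) : ℂ) * Complex.I)
        = Complex.exp ((t : ℂ) * Complex.I) := by
      push_cast
      exact Complex.exp_mul_I_periodic t
    simp only [hexp]
  have hTeq : (∫ θ in (0:ℝ)..(2 * π), ‖α ((x:ℂ) * Complex.exp (θ * Complex.I))‖ ^ 2) = T := by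
    have h1 := hperiodic.intervalIntegral_add_eq 0 (-π)
    rw [zero_add] at h1
    have h2 : -π + 2 * π = π := by ring
    rw [h2] at h1
    rw [h1, intervalIntegral.integral_of_le (by linarith), integral_Ioc_eq_integral_Ioo]
  have hineq := period_sq_le α hsm hx0 hx1
  rw [hcval x ⟨hx0, hx1⟩, hTeq] at hineq
  have hTnn : 0 ≤ T :=
    setIntegral_nonneg measurableSet_Ioo (fun θ _ => by positivity)
  have hreal : c ^ 2 / (2 * π) * (1 / x) ≤ x * T := by
    rw [div_mul_eq_mul_div, mul_one_div, div_div, div_le_iff₀ (by positivity)]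
    nlinarith [hineq]
  calc ENNReal.ofReal (c ^ 2 / (2 * π) * (1 / x)) ≤ ENNReal.ofReal (x * T) :=
      ENNReal.ofReal_le_ofReal hreal
    _ = ENNReal.ofReal x * ENNReal.ofReal T := ENNReal.ofReal_mul hx0.le
    _ = ENNReal.ofReal x * ∫⁻ θ in Ioo (-π) π,
          ENNReal.ofReal (‖α ((x:ℂ) * Complex.exp (θ * Complex.I))‖ ^ 2) := by
        rw [hT, ofReal_integral_eq_lintegral_ofReal hTint
          (Filter.Eventually.of_forall (fun θ => by positivity))]
    _ = ∫⁻ θ in Ioo (-π) π, ENNReal.ofReal x *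
          ENNReal.ofReal (‖α ((x:ℂ) * Complex.exp (θ * Complex.I))‖ ^ 2) :=
        (lintegral_const_mul' _ _ ENNReal.ofReal_ne_top).symm
    _ = ∫⁻ θ in Ioo (-π) π,
          ENNReal.ofReal (x * ‖α ((x:ℂ) * Complex.exp (θ * Complex.I))‖ ^ 2) :=
        lintegral_congr (fun θ => (ENNReal.ofReal_mul hx0.le).symm)

end

/-- let `α` be a smooth closed 1-form on the punctured unit disk
`D \ {0} ⊆ ℂ = ℝ²` (closedness expressed by symmetry of the derivative of `α`), which is
L² on the disk.  Then the period `∫_{S¹_r} α = 0` for every circle of radius `0 < r < 1`;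
i.e. `α` is exact on `D \ {0}`. -/
theorem stmt_12
    (α : ℂ → (ℂ →L[ℝ] ℝ))
    (hsm : ContDiffOn ℝ (⊤ : ℕ∞) α (Metric.ball 0 1 \ {0}))
    (hclosed : ∀ x ∈ Metric.ball (0:ℂ) 1 \ {0}, ∀ v w : ℂ,
      fderiv ℝ α x v w = fderiv ℝ α x w v)
    (hL2 : IntegrableOn (fun x => ‖α x‖ ^ 2) (Metric.ball (0:ℂ) 1)) :
    ∀ r : ℝ, 0 < r → r < 1 →
      (∫ θ in (0:ℝ)..(2 * π),
        α ((r : ℂ) * Complex.exp (θ * Complex.I))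
          ((r : ℂ) * Complex.I * Complex.exp (θ * Complex.I))) = 0 := by
  intro r hr0 hr1
  set c : ℝ := ∫ θ in (0:ℝ)..(2 * π),
      α ((r : ℂ) * Complex.exp (θ * Complex.I))
        ((r : ℂ) * Complex.I * Complex.exp (θ * Complex.I)) with hc
  by_contra hc0
  have hπ : 0 < π := Real.pi_pos
  set J : ℝ≥0∞ := ∫⁻ z in Metric.ball (0:ℂ) 1, ENNReal.ofReal (‖α z‖ ^ 2) with hJdef
  have hJfin : J ≠ ⊤ := by
    have h := hL2.2
    rw [hasFiniteIntegral_iff_norm] at h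
    have heq : ∀ z : ℂ, ENNReal.ofReal ‖‖α z‖ ^ 2‖ = ENNReal.ofReal (‖α z‖ ^ 2) :=
      fun z => by rw [Real.norm_of_nonneg (by positivity)]
    rw [hJdef]
    rw [show (fun z : ℂ => ENNReal.ofReal (‖α z‖ ^ 2))
      = fun z : ℂ => ENNReal.ofReal ‖‖α z‖ ^ 2‖ from funext (fun z => (heq z).symm)]
    exact h.ne
  have hcval : ∀ s ∈ Ioo (0:ℝ) 1, (∫ θ in (0:ℝ)..(2 * π),
      α ((s : ℂ) * Complex.exp (θ * Complex.I))
        ((s : ℂ) * Complex.I * Complex.exp (θ * Complex.I))) = c :=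
    fun s hs => (period_const α hsm hclosed hs ⟨hr0, hr1⟩).trans hc.symm
  have hkey : ∀ n : ℕ, ENNReal.ofReal (c ^ 2 / (2 * π) * ((n : ℝ) + 1)) ≤ J := by
    intro n
    set ε' : ℝ := Real.exp (-((n : ℝ) + 1)) with hε'
    have hε0 : 0 < ε' := Real.exp_pos _
    have hε1 : ε' < 1 := by
      have h0' : -((n:ℝ) + 1) < 0 := by
        have : (0:ℝ) ≤ (n:ℝ) := Nat.cast_nonneg n
        linarith
      calc ε' = Real.exp (-((n:ℝ) + 1)) := hε'
        _ < Real.exp 0 := Real.exp_lt_exp.mpr h0'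
        _ = 1 := Real.exp_zero
    -- the 1-dimensional integral of c²/(2π x)
    have hcontOn : ContinuousOn (fun x : ℝ => c ^ 2 / (2 * π) * (1 / x)) (Icc ε' 1) :=
      continuousOn_const.mul (continuousOn_const.div continuousOn_id
        (fun x hx => ne_of_gt (lt_of_lt_of_le hε0 hx.1)))
    have hint1 : IntegrableOn (fun x : ℝ => c ^ 2 / (2 * π) * (1 / x)) (Ioo ε' 1) :=
      (hcontOn.integrableOn_Icc).mono_set Ioo_subset_Icc_self
    have hlog : (∫ x in (ε':ℝ)..1, c ^ 2 / (2 * π) * (1 / x))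
        = c ^ 2 / (2 * π) * ((n : ℝ) + 1) := by
      rw [intervalIntegral.integral_const_mul, integral_one_div]
      · rw [one_div, Real.log_inv, hε', Real.log_exp]
        ring
      · intro hmem
        rw [Set.uIcc_of_le hε1.le] at hmem
        exact absurd hmem.1 (by linarith)
    have hIoo : (∫ x in Ioo ε' 1, c ^ 2 / (2 * π) * (1 / x))
        = ∫ x in (ε':ℝ)..1, c ^ 2 / (2 * π) * (1 / x) := by
      rw [intervalIntegral.integral_of_le hε1.le, integral_Ioc_eq_integral_Ioo]
    have h5 : ENNReal.ofReal (c ^ 2 / (2 * π) * ((n : ℝ) + 1))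
        = ∫⁻ x in Ioo ε' 1, ENNReal.ofReal (c ^ 2 / (2 * π) * (1 / x)) := by
      rw [← hlog, ← hIoo]
      apply ofReal_integral_eq_lintegral_ofReal hint1
      refine (ae_restrict_iff' measurableSet_Ioo).mpr (Filter.Eventually.of_forall ?_)
      intro x hx
      have hx0 : 0 < x := hε0.trans hx.1
      positivity
    rw [h5]
    calc (∫⁻ x in Ioo ε' 1, ENNReal.ofReal (c ^ 2 / (2 * π) * (1 / x)))
        ≤ ∫⁻ x in Ioo ε' 1, ∫⁻ θ in Ioo (-π) π,
            ENNReal.ofReal (x * ‖α ((x:ℂ) * Complex.exp (θ * Complex.I))‖ ^ 2) := by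
          apply lintegral_mono_ae
          refine (ae_restrict_iff' measurableSet_Ioo).mpr (Filter.Eventually.of_forall ?_)
          intro x hx
          exact inner_bound α hsm hclosed hcval (hε0.trans hx.1) hx.2
      _ ≤ J := polar_le α hsm hε0 hε1
  -- contradiction
  have hcpos : 0 < c ^ 2 / (2 * π) := by
    apply div_pos _ (by positivity)
    exact (sq_nonneg c).lt_of_ne (Ne.symm (pow_ne_zero 2 hc0))
  have hn : ∀ n : ℕ, c ^ 2 / (2 * π) * ((n : ℝ) + 1) ≤ J.toReal := by
    intro n
    have h := ENNReal.toReal_mono hJfin (hkey n)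
    rwa [ENNReal.toReal_ofReal (by positivity)] at h
  obtain ⟨n, hn'⟩ := exists_nat_gt (J.toReal / (c ^ 2 / (2 * π)))
  have h1 := hn n
  rw [div_lt_iff₀ hcpos] at hn'
  nlinarith [hn', h1, hcpos]
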